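/- arXiv:2211.10607 — 2 statements merged into one kernel-verified Lean document; each statement's English description precedes it below -/
import Mathlib

section
/- For every integer n ≥ 2 there exists a hypergraph H with no isolated vertices such that γ_i(H) ≥ n, γ_E(H) = 1, and the strong total domination number satisfies γ̃(H) ≤ n; consequently γ_i(H) − max{⌈γ̃(H)/2⌉, γ_E(H)} ≥ n − ⌈n/2⌉, so this gap can be made arbitrarily large. -/
/-- A hypergraph: a finite vertex set `V` together with a finite family `E` of
subsets of `V` (the edges). -/
structure FinHypergraph where
  V : Finset ℕ
  E : Finset (Finset ℕ)
  edge_subset : ∀ e ∈ E, e ⊆ V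

namespace FinHypergraph

/-- The set of neighbours of `v`: all vertices `w` such that some edge contains
both `v` and `w`. -/
def nbhd (H : FinHypergraph) (v : ℕ) : Finset ℕ :=
  H.V.filter fun w => ∃ e ∈ H.E, v ∈ e ∧ w ∈ e

/-- `N(S) = ⋃ v ∈ S, N(v)`. -/
def nbhdSet (H : FinHypergraph) (S : Finset ℕ) : Finset ℕ :=
  S.biUnion H.nbhd

/-- `H` has no isolated vertex: every vertex has a neighbour. -/
def NoIsolatedVertex (H : FinHypergraph) : Prop :=
  ∀ v ∈ H.V, (H.nbhd v).Nonempty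

/-- `B` is a cover of `H` if it meets every edge. -/
def IsCover (H : FinHypergraph) (B : Finset ℕ) : Prop :=
  B ⊆ H.V ∧ ∀ e ∈ H.E, (e ∩ B).Nonempty

instance (H : FinHypergraph) (B : Finset ℕ) : Decidable (H.IsCover B) :=
  inferInstanceAs (Decidable (_ ∧ _))

/-- `A` is independent if it contains no edge. -/
def IsIndependent (H : FinHypergraph) (A : Finset ℕ) : Prop :=
  A ⊆ H.V ∧ ∀ e ∈ H.E, ¬ e ⊆ A

/-- `W ⊆ V ∖ A` is a dominating set of `A` if `A ⊆ N(W)`. -/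
def IsDominatingSet (H : FinHypergraph) (A W : Finset ℕ) : Prop :=
  W ⊆ H.V \ A ∧ A ⊆ H.nbhdSet W

/-- The domination number `γ_A(H)` of a set `A`: the minimum size of a
dominating set of `A`. -/
noncomputable def domNumber (H : FinHypergraph) (A : Finset ℕ) : ℕ :=
  sInf {n | ∃ W, H.IsDominatingSet A W ∧ W.card = n}

/-- The independence domination number
`γ_i(H) = max {γ_I(H) : I independent}`. -/
noncomputable def indepDomNumber (H : FinHypergraph) : ℕ :=
  sSup {n | ∃ I, H.IsIndependent I ∧ H.domNumber I = n}

end FinHypergraph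
namespace FinHypergraph

/-- `B` strongly totally dominates `v`: some `B' ⊆ B ∖ {v}` has
`B' ∪ {v} ∈ E(H)`. -/
def StronglyTotallyDominates (H : FinHypergraph) (B : Finset ℕ) (v : ℕ) : Prop :=
  ∃ B' ⊆ B \ {v}, B' ∪ {v} ∈ H.E

/-- `B` strongly dominates `W`: `B` strongly totally dominates every vertex
of `W`. -/
def StronglyDominates (H : FinHypergraph) (B W : Finset ℕ) : Prop :=
  ∀ v ∈ W, H.StronglyTotallyDominates B v

/-- The strong total domination number `γ(H; W)` of `W` in `H`. -/
noncomputable def strongDomNumberOf (H : FinHypergraph) (W : Finset ℕ) : ℕ :=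
  sInf {n | ∃ B, B ⊆ H.V ∧ H.StronglyDominates B W ∧ B.card = n}

/-- `I` is strongly independent: independent, and every edge contains at most
one vertex of `I`. -/
def IsStronglyIndependent (H : FinHypergraph) (I : Finset ℕ) : Prop :=
  H.IsIndependent I ∧ ∀ e ∈ H.E, (e ∩ I).card ≤ 1

/-- The strong independence domination number
`γ_si(H) = max {γ(H; I) : I strongly independent}`. -/
noncomputable def strongIndepDomNumber (H : FinHypergraph) : ℕ :=
  sSup {n | ∃ I, H.IsStronglyIndependent I ∧ H.strongDomNumberOf I = n}

/-- The strong total domination number `γ̃(H) = γ(H; V(H))`. -/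
noncomputable def strongTotalDomNumber (H : FinHypergraph) : ℕ :=
  H.strongDomNumberOf H.V

/-- The edgewise-domination number `γ_E(H)`: the minimum number of edges whose
union strongly dominates `V(H)`. -/
noncomputable def edgewiseDomNumber (H : FinHypergraph) : ℕ :=
  sInf {n | ∃ F, F ⊆ H.E ∧ H.StronglyDominates (F.sup id) H.V ∧ F.card = n}

end FinHypergraph

/-! The `n` leaves of `starPath n` are independent, and the only neighbour of a leaf that is
not itself a leaf is its own center, so dominating the leaves takes all `n` centers: `γ_i ≥ n`.
Yet the centers strongly dominate every vertex (through the path and the star edges), so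
`γ̃ ≤ n`, and they form a single edge, so `γ_E = 1`. -/

namespace FinHypergraph

open Finset

section General

variable {H : FinHypergraph}

theorem mem_nbhd_of_mem_edge {e : Finset ℕ} {v w : ℕ} (he : e ∈ H.E) (hv : v ∈ e)
    (hw : w ∈ e) : w ∈ H.nbhd v :=
  mem_filter.2 ⟨H.edge_subset e he hw, e, he, hv, hw⟩

theorem noIsolatedVertex_of_forall_exists_edge (h : ∀ v ∈ H.V, ∃ e ∈ H.E, v ∈ e) :
    H.NoIsolatedVertex := by
  intro v hv
  obtain ⟨e, he, hve⟩ := h v hv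
  exact ⟨v, mem_nbhd_of_mem_edge he hve hve⟩

theorem domNumber_le_card {A W : Finset ℕ} (hW : H.IsDominatingSet A W) :
    H.domNumber A ≤ W.card :=
  Nat.sInf_le ⟨W, hW, rfl⟩

theorem domNumber_le_card_V (A : Finset ℕ) : H.domNumber A ≤ H.V.card := by
  by_cases h : ∃ W, H.IsDominatingSet A W
  · obtain ⟨W, hW⟩ := h
    exact (domNumber_le_card hW).trans (card_le_card (hW.1.trans sdiff_subset))
  · simp only [domNumber, not_exists.1 h, false_and, exists_false, Set.ofPred_false,
      Nat.sInf_empty, zero_le]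

theorem domNumber_le_indepDomNumber {I : Finset ℕ} (hI : H.IsIndependent I) :
    H.domNumber I ≤ H.indepDomNumber := by
  refine le_csSup ⟨H.V.card, ?_⟩ ⟨I, hI, rfl⟩
  rintro m ⟨J, -, rfl⟩
  exact domNumber_le_card_V J

theorem le_domNumber {A W₀ : Finset ℕ} {k : ℕ} (hW₀ : H.IsDominatingSet A W₀)
    (h : ∀ W, H.IsDominatingSet A W → k ≤ W.card) : k ≤ H.domNumber A :=
  le_csInf ⟨_, W₀, hW₀, rfl⟩ (by rintro m ⟨W, hW, rfl⟩; exact h W hW)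

theorem stronglyTotallyDominates_of_pair_mem {B : Finset ℕ} {u v : ℕ} (he : {u, v} ∈ H.E)
    (hu : u ∈ B) (huv : u ≠ v) : H.StronglyTotallyDominates B v :=
  ⟨{u}, by simpa [huv], by rwa [← insert_eq]⟩

theorem strongTotalDomNumber_le_card {B : Finset ℕ} (hB : B ⊆ H.V)
    (hdom : H.StronglyDominates B H.V) : H.strongTotalDomNumber ≤ B.card :=
  Nat.sInf_le (s := {n | ∃ B, B ⊆ H.V ∧ H.StronglyDominates B H.V ∧ B.card = n})
    ⟨B, hB, hdom, rfl⟩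

/-- `{v} ∉ H.E` rules out `γ_E(H) = 0`: the empty family strongly dominates `v` only if `{v}`
is an edge. -/
theorem edgewiseDomNumber_eq_one {e : Finset ℕ} {v : ℕ} (he : e ∈ H.E)
    (hdom : H.StronglyDominates e H.V) (hv : v ∈ H.V) (hsingle : {v} ∉ H.E) :
    H.edgewiseDomNumber = 1 := by
  have hone : 1 ∈ {m | ∃ F, F ⊆ H.E ∧ H.StronglyDominates (F.sup id) H.V ∧ F.card = m} :=
    ⟨{e}, singleton_subset_iff.2 he, by rwa [sup_singleton], card_singleton e⟩
  refine le_antisymm (Nat.sInf_le hone) (le_csInf ⟨1, hone⟩ ?_)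
  rintro m ⟨F, -, hF, rfl⟩
  rw [Nat.one_le_iff_ne_zero, Ne, card_eq_zero]
  rintro rfl
  obtain ⟨B', hB', hB'v⟩ := hF v hv
  rw [sup_empty, bot_eq_empty, empty_sdiff, subset_empty] at hB'
  rw [hB', empty_union] at hB'v
  exact hsingle hB'v

end General

/-- `n` stars `K₂` whose centers `0, …, n-1` are joined by a path and by one big edge; the leaf
of center `i` is `n + i`. -/
def starPath (n : ℕ) : FinHypergraph where
  V := range (2 * n)
  E := insert (range n)
        ((range n).image (fun i => {i, n + i}) ∪ (range (n - 1)).image (fun i => {i, i + 1}))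
  edge_subset := by
    intro e he
    simp only [mem_insert, mem_union, mem_image, mem_range] at he
    rcases he with rfl | ⟨i, hi, rfl⟩ | ⟨i, hi, rfl⟩ <;> intro x hx <;>
      simp only [mem_insert, mem_singleton, mem_range] at hx ⊢ <;> omega

variable {n : ℕ}

@[simp]
theorem starPath_V : (starPath n).V = range (2 * n) := rfl

theorem mem_starPath_E {e : Finset ℕ} :
    e ∈ (starPath n).E ↔
      e = range n ∨ (∃ i < n, e = {i, n + i}) ∨ ∃ i < n - 1, e = {i, i + 1} := by
  simp only [starPath, mem_insert, mem_union, mem_image, mem_range, eq_comm (b := e)]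

theorem star_mem_starPath_E {i : ℕ} (hi : i < n) : {i, n + i} ∈ (starPath n).E :=
  mem_starPath_E.2 (Or.inr (Or.inl ⟨i, hi, rfl⟩))

theorem path_mem_starPath_E {i : ℕ} (hi : i < n - 1) : {i, i + 1} ∈ (starPath n).E :=
  mem_starPath_E.2 (Or.inr (Or.inr ⟨i, hi, rfl⟩))

theorem two_le_card_of_mem_starPath_E (hn : 2 ≤ n) {e : Finset ℕ} (he : e ∈ (starPath n).E) :
    2 ≤ e.card := by
  rcases mem_starPath_E.1 he with rfl | ⟨i, -, rfl⟩ | ⟨i, -, rfl⟩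
  · rwa [card_range]
  · rw [card_pair (by omega)]
  · rw [card_pair (by omega)]

theorem exists_center_mem_of_mem_starPath_E (hn : 0 < n) {e : Finset ℕ}
    (he : e ∈ (starPath n).E) : ∃ i < n, i ∈ e := by
  rcases mem_starPath_E.1 he with rfl | ⟨i, hi, rfl⟩ | ⟨i, hi, rfl⟩
  · exact ⟨0, hn, mem_range.2 hn⟩
  · exact ⟨i, hi, mem_insert_self _ _⟩
  · exact ⟨i, by omega, mem_insert_self _ _⟩

theorem starPath_stronglyDominates_centers (hn : 2 ≤ n) :
    (starPath n).StronglyDominates (range n) (starPath n).V := by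
  intro v hv
  rw [starPath_V, mem_range] at hv
  rcases lt_or_ge v n with hc | hl
  · rcases lt_or_ge (v + 1) n with hsucc | hlast
    · refine stronglyTotallyDominates_of_pair_mem ?_ (mem_range.2 hsucc) (by omega)
      rw [pair_comm]
      exact path_mem_starPath_E (by omega)
    · refine stronglyTotallyDominates_of_pair_mem ?_ (mem_range.2 (by omega : v - 1 < n))
        (by omega)
      convert path_mem_starPath_E (n := n) (i := v - 1) (by omega) using 3
      omega
  · refine stronglyTotallyDominates_of_pair_mem ?_ (mem_range.2 (by omega : v - n < n)) (by omega)
    convert star_mem_starPath_E (n := n) (i := v - n) (by omega) using 3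
    omega

theorem starPath_noIsolatedVertex : (starPath n).NoIsolatedVertex := by
  refine noIsolatedVertex_of_forall_exists_edge fun v hv => ?_
  rw [starPath_V, mem_range] at hv
  rcases lt_or_ge v n with hc | hl
  · exact ⟨_, star_mem_starPath_E hc, mem_insert_self _ _⟩
  · exact ⟨_, star_mem_starPath_E (i := v - n) (by omega),
      mem_insert_of_mem (mem_singleton.2 (by omega))⟩

theorem starPath_isIndependent_leaves (hn : 0 < n) :
    (starPath n).IsIndependent (Ico n (2 * n)) := by
  refine ⟨fun x hx => mem_range.2 (mem_Ico.1 hx).2, fun e he hsub => ?_⟩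
  obtain ⟨i, hi, hie⟩ := exists_center_mem_of_mem_starPath_E hn he
  exact absurd (mem_Ico.1 (hsub hie)).1 (by omega)

theorem eq_of_leaf_mem_nbhd_center {i w : ℕ} (hi : i < n) (hw : w < n)
    (h : n + i ∈ (starPath n).nbhd w) : w = i := by
  obtain ⟨-, e, he, hwe, hie⟩ := mem_filter.1 h
  rcases mem_starPath_E.1 he with rfl | ⟨j, hj, rfl⟩ | ⟨j, hj, rfl⟩
  · simp only [mem_range] at hie; omega
  · simp only [mem_insert, mem_singleton] at hwe hie; omega
  · simp only [mem_insert, mem_singleton] at hie; omega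

theorem starPath_isDominatingSet_leaves_centers :
    (starPath n).IsDominatingSet (Ico n (2 * n)) (range n) := by
  refine ⟨fun x hx => ?_, fun v hv => ?_⟩
  · simp only [mem_range] at hx
    simp only [starPath_V, mem_sdiff, mem_range, mem_Ico]
    omega
  · simp only [mem_Ico] at hv
    refine mem_biUnion.2 ⟨v - n, mem_range.2 (by omega), ?_⟩
    exact mem_nbhd_of_mem_edge (star_mem_starPath_E (i := v - n) (by omega))
      (mem_insert_self _ _) (mem_insert_of_mem (mem_singleton.2 (by omega)))

theorem range_subset_of_isDominatingSet_leaves {W : Finset ℕ}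
    (hW : (starPath n).IsDominatingSet (Ico n (2 * n)) W) : range n ⊆ W := by
  intro i hi
  rw [mem_range] at hi
  obtain ⟨w, hwW, hw⟩ := mem_biUnion.1 (hW.2 (mem_Ico.2 ⟨by omega, by omega⟩ : n + i ∈ _))
  have hwc : w < n := by
    have := hW.1 hwW
    simp only [starPath_V, mem_sdiff, mem_range, mem_Ico] at this
    omega
  rwa [← eq_of_leaf_mem_nbhd_center hi hwc hw]

theorem le_starPath_indepDomNumber (hn : 0 < n) : n ≤ (starPath n).indepDomNumber := by
  refine le_trans ?_ (domNumber_le_indepDomNumber (starPath_isIndependent_leaves hn))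
  refine le_domNumber starPath_isDominatingSet_leaves_centers fun W hW => ?_
  exact card_range n ▸ card_le_card (range_subset_of_isDominatingSet_leaves hW)

theorem starPath_edgewiseDomNumber (hn : 2 ≤ n) : (starPath n).edgewiseDomNumber = 1 :=
  edgewiseDomNumber_eq_one (mem_starPath_E.2 (Or.inl rfl))
    (starPath_stronglyDominates_centers hn) (mem_range.2 (by omega) : 0 ∈ range (2 * n))
    fun h => by simpa using two_le_card_of_mem_starPath_E hn h

theorem starPath_strongTotalDomNumber_le (hn : 2 ≤ n) :
    (starPath n).strongTotalDomNumber ≤ n :=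
  (strongTotalDomNumber_le_card (range_subset_range.2 (by omega))
    (starPath_stronglyDominates_centers hn)).trans_eq (card_range n)

end FinHypergraph

/-- For every `n ≥ 2` there is a hypergraph `H` with no
isolated vertices such that `γ_i(H) ≥ n`, `γ_E(H) = 1` and `γ̃(H) ≤ n`;
consequently `γ_i(H) − max {⌈γ̃(H)/2⌉, γ_E(H)} ≥ n − ⌈n/2⌉`, so the gap can be
made arbitrarily large. -/
theorem exists_hypergraph_large_gap (n : ℕ) (hn : 2 ≤ n) :
    ∃ H : FinHypergraph, H.NoIsolatedVertex ∧ n ≤ H.indepDomNumber ∧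
      H.edgewiseDomNumber = 1 ∧ H.strongTotalDomNumber ≤ n ∧
      n - (n + 1) / 2 ≤
        H.indepDomNumber - max ((H.strongTotalDomNumber + 1) / 2) H.edgewiseDomNumber := by
  have hγi := FinHypergraph.le_starPath_indepDomNumber (by omega : 0 < n)
  have hγE := FinHypergraph.starPath_edgewiseDomNumber hn
  have hγ := FinHypergraph.starPath_strongTotalDomNumber_le hn
  refine ⟨_, FinHypergraph.starPath_noIsolatedVertex, hγi, hγE, hγ, ?_⟩
  rw [hγE]
  omega
end

section
/- Let X be a finite abstract simplicial complex and σ ∈ X a k-dimensional face. Then C(X) ≤ max{C(del(σ, X)), C(lk(σ, X)) + k + 1}. -/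
/-- A finite abstract simplicial complex on vertex set `ℕ`: a finite family of
finite sets (faces) closed under taking subsets. -/
structure SComplex where
  faces : Finset (Finset ℕ)
  down_closed : ∀ ⦃σ⦄, σ ∈ faces → ∀ ⦃τ⦄, τ ⊆ σ → τ ∈ faces

namespace SComplex

/-- The vertex set of a simplicial complex. -/
def vertices (X : SComplex) : Finset ℕ := X.faces.sup id

/-- `σ` is a maximal face (facet) of `X`. -/
def IsMaximalFace (X : SComplex) (σ : Finset ℕ) : Prop :=
  σ ∈ X.faces ∧ ∀ τ ∈ X.faces, σ ⊆ τ → τ = σ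

/-- `(γ, σ)` is a free pair: `σ` is the unique maximal face containing `γ`. -/
def IsFreePair (X : SComplex) (γ σ : Finset ℕ) : Prop :=
  γ ∈ X.faces ∧ X.IsMaximalFace σ ∧ γ ⊆ σ ∧
    ∀ τ, X.IsMaximalFace τ → γ ⊆ τ → τ = σ

/-- The empty complex. -/
def empty : SComplex := ⟨∅, by intro σ h; simp at h⟩

/-- An elementary `d`-collapse from `X` to `Y`: there is a free pair `(γ, σ)`
with `|γ| ≤ d`, and `Y` is obtained from `X` by removing all faces `τ` with
`γ ⊆ τ ⊆ σ`. -/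
def ElemCollapse (d : ℕ) (X Y : SComplex) : Prop :=
  ∃ γ σ, X.IsFreePair γ σ ∧ γ.card ≤ d ∧
    Y.faces = X.faces.filter fun τ => ¬ (γ ⊆ τ ∧ τ ⊆ σ)

/-- `X` is `d`-collapsible: some finite sequence of elementary `d`-collapses
reduces `X` to the empty complex. -/
def Collapsible (d : ℕ) (X : SComplex) : Prop :=
  Relation.ReflTransGen (ElemCollapse d) X SComplex.empty

/-- The collapsibility number `C(X)`: the least `d` such that `X` is
`d`-collapsible. -/
noncomputable def collapsibility (X : SComplex) : ℕ :=
  sInf {d | X.Collapsible d}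

/-- The link of a face `σ`. -/
def link (X : SComplex) (σ : Finset ℕ) : SComplex where
  faces := X.faces.filter fun τ => σ ∩ τ = ∅ ∧ σ ∪ τ ∈ X.faces
  down_closed := by
    intro τ hτ ρ hρ
    simp only [Finset.mem_filter] at hτ ⊢
    have h1 : σ ∩ ρ ⊆ σ ∩ τ := Finset.inter_subset_inter (le_refl σ) hρ
    rw [hτ.2.1] at h1
    exact ⟨X.down_closed hτ.1 hρ, Finset.subset_empty.mp h1,
      X.down_closed hτ.2.2 (Finset.union_subset_union (le_refl σ) hρ)⟩

/-- The deletion of a face `σ`. -/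
def del (X : SComplex) (σ : Finset ℕ) : SComplex where
  faces := X.faces.filter fun τ => ¬ σ ⊆ τ
  down_closed := by
    intro τ hτ ρ hρ
    simp only [Finset.mem_filter] at hτ ⊢
    exact ⟨X.down_closed hτ.1 hρ, fun hc => hτ.2 (hc.trans hρ)⟩

/-- The induced subcomplex `X[A]` on a set `A` of vertices. -/
def induced (X : SComplex) (A : Finset ℕ) : SComplex where
  faces := X.faces.filter fun τ => τ ⊆ A
  down_closed := by
    intro τ hτ ρ hρ
    simp only [Finset.mem_filter] at hτ ⊢
    exact ⟨X.down_closed hτ.1 hρ, hρ.trans hτ.2⟩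

end SComplex


/-!
A free pair `(γ, τ)` of `lk(σ, X)` lifts to the free pair `(σ ∪ γ, σ ∪ τ)` of `X`, with
`|σ ∪ γ| ≤ |γ| + k + 1`. Collapsing it deletes `σ ∪ γ`, which acts on the link as deleting
`γ` and does not change `del(σ, X)`. Hence a `C(lk σ)`-collapse of the link to the empty
complex lifts to a `(C(lk σ) + k + 1)`-collapse of `X` onto `del(σ, X)`, and this complex
is `C(del σ)`-collapsible.
-/

namespace SComplex

@[ext]
theorem ext {X Y : SComplex} (h : X.faces = Y.faces) : X = Y := by
  cases X; cases Y; congr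

theorem mem_link {X : SComplex} {σ τ : Finset ℕ} :
    τ ∈ (X.link σ).faces ↔ τ ∈ X.faces ∧ σ ∩ τ = ∅ ∧ σ ∪ τ ∈ X.faces :=
  Finset.mem_filter

theorem mem_del {X : SComplex} {σ τ : Finset ℕ} :
    τ ∈ (X.del σ).faces ↔ τ ∈ X.faces ∧ ¬ σ ⊆ τ :=
  Finset.mem_filter

theorem exists_isMaximalFace_superset (X : SComplex) {τ : Finset ℕ} (hτ : τ ∈ X.faces) :
    ∃ ν, X.IsMaximalFace ν ∧ τ ⊆ ν := by
  classical
  obtain ⟨ν, hν, hmax⟩ := (X.faces.filter (τ ⊆ ·)).exists_maximal ⟨τ, by simp [hτ]⟩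
  rw [Finset.mem_filter] at hν
  exact ⟨ν, ⟨hν.1, fun ρ hρ hνρ =>
    (hmax (Finset.mem_filter.mpr ⟨hρ, hν.2.trans hνρ⟩) hνρ).antisymm hνρ⟩, hν.2⟩

theorem IsMaximalFace.isFreePair_self {X : SComplex} {ν : Finset ℕ} (h : X.IsMaximalFace ν) :
    X.IsFreePair ν ν :=
  ⟨h.1, h, subset_rfl, fun _ hρ hνρ => h.2 _ hρ.1 hνρ⟩

theorem IsFreePair.subset_of_superset {X : SComplex} {γ σ τ : Finset ℕ}
    (h : X.IsFreePair γ σ) (hτ : τ ∈ X.faces) (hγτ : γ ⊆ τ) : τ ⊆ σ := by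
  obtain ⟨ν, hν, hτν⟩ := X.exists_isMaximalFace_superset hτ
  exact h.2.2.2 ν hν (hγτ.trans hτν) ▸ hτν

/-- An elementary collapse at a free pair `(γ, σ)` is just the deletion of `γ`. -/
theorem IsFreePair.del_faces {X : SComplex} {γ σ : Finset ℕ} (h : X.IsFreePair γ σ) :
    (X.del γ).faces = X.faces.filter fun τ => ¬ (γ ⊆ τ ∧ τ ⊆ σ) := by
  ext τ
  rw [mem_del, Finset.mem_filter]
  exact and_congr_right fun hτ => not_congr
    ⟨fun hγτ => ⟨hγτ, h.subset_of_superset hτ hγτ⟩, And.left⟩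

theorem elemCollapse_iff {d : ℕ} {X Y : SComplex} :
    ElemCollapse d X Y ↔ ∃ γ σ, X.IsFreePair γ σ ∧ γ.card ≤ d ∧ Y = X.del γ := by
  refine exists₂_congr fun γ σ => and_congr_right fun h => and_congr_right fun _ => ?_
  rw [← h.del_faces]
  exact ⟨ext, congrArg faces⟩

theorem ElemCollapse.mono {d d' : ℕ} {X Y : SComplex} (h : ElemCollapse d X Y) (hd : d ≤ d') :
    ElemCollapse d' X Y :=
  let ⟨γ, σ, hfree, hγ, hY⟩ := h
  ⟨γ, σ, hfree, hγ.trans hd, hY⟩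

abbrev CollapsesTo (d : ℕ) (X Y : SComplex) : Prop :=
  Relation.ReflTransGen (ElemCollapse d) X Y

theorem CollapsesTo.mono {d d' : ℕ} {X Y : SComplex} (h : CollapsesTo d X Y) (hd : d ≤ d') :
    CollapsesTo d' X Y :=
  Relation.ReflTransGen.mono (fun _ _ hstep => hstep.mono hd) _ _ h

theorem Collapsible.mono {d d' : ℕ} {X : SComplex} (h : X.Collapsible d) (hd : d ≤ d') :
    X.Collapsible d' :=
  CollapsesTo.mono h hd

/-- Removing the facets one at a time shows that every complex is collapsible. -/
theorem collapsible_sup_card (X : SComplex) : X.Collapsible (X.faces.sup Finset.card) := by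
  induction hn : X.faces.card using Nat.strong_induction_on generalizing X with
  | _ n ih =>
    rcases X.faces.eq_empty_or_nonempty with hempty | ⟨τ, hτ⟩
    · exact (ext hempty : X = empty) ▸ Relation.ReflTransGen.refl
    obtain ⟨ν, hν, -⟩ := X.exists_isMaximalFace_superset hτ
    have hsub : (X.del ν).faces ⊆ X.faces := Finset.filter_subset _ _
    have hlt : (X.del ν).faces.card < n :=
      hn ▸ Finset.card_lt_card ⟨hsub, fun h => (mem_del.mp (h hν.1)).2 subset_rfl⟩
    have hstep : ElemCollapse (X.faces.sup Finset.card) X (X.del ν) :=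
      elemCollapse_iff.mpr ⟨ν, ν, hν.isFreePair_self, Finset.le_sup hν.1, rfl⟩
    exact .head hstep ((ih _ hlt _ rfl).mono (Finset.sup_mono hsub))

theorem collapsible_collapsibility (X : SComplex) : X.Collapsible X.collapsibility :=
  Nat.sInf_mem (s := {d | X.Collapsible d}) ⟨_, X.collapsible_sup_card⟩

theorem collapsibility_le {d : ℕ} {X : SComplex} (h : X.Collapsible d) :
    X.collapsibility ≤ d :=
  Nat.sInf_le h

theorem sdiff_mem_link {X : SComplex} {σ ν : Finset ℕ} (hν : ν ∈ X.faces) (hσν : σ ⊆ ν) :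
    ν \ σ ∈ (X.link σ).faces :=
  mem_link.mpr ⟨X.down_closed hν Finset.sdiff_subset, Finset.inter_sdiff_self σ ν,
    (Finset.union_sdiff_of_subset hσν).symm ▸ hν⟩

theorem disjoint_of_mem_link {X : SComplex} {σ τ : Finset ℕ} (hτ : τ ∈ (X.link σ).faces) :
    Disjoint τ σ :=
  (Finset.disjoint_iff_inter_eq_empty.mpr (mem_link.mp hτ).2.1).symm

theorem IsMaximalFace.union_of_link {X : SComplex} {σ τ : Finset ℕ}
    (h : (X.link σ).IsMaximalFace τ) : X.IsMaximalFace (σ ∪ τ) := by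
  refine ⟨(mem_link.mp h.1).2.2, fun ν hν hsub => ?_⟩
  have hσν : σ ⊆ ν := Finset.union_subset_iff.mp hsub |>.1
  have hτν : τ ⊆ ν \ σ :=
    Finset.subset_sdiff.mpr ⟨Finset.union_subset_iff.mp hsub |>.2, disjoint_of_mem_link h.1⟩
  rw [← h.2 _ (sdiff_mem_link hν hσν) hτν, Finset.union_sdiff_of_subset hσν]

theorem IsMaximalFace.sdiff_link {X : SComplex} {σ ν : Finset ℕ} (h : X.IsMaximalFace ν)
    (hσν : σ ⊆ ν) : (X.link σ).IsMaximalFace (ν \ σ) := by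
  refine ⟨sdiff_mem_link h.1 hσν, fun ρ hρ hsub => ?_⟩
  have hν : σ ∪ ρ = ν := h.2 _ (mem_link.mp hρ).2.2 <| by
    calc ν = σ ∪ ν \ σ := (Finset.union_sdiff_of_subset hσν).symm
      _ ⊆ σ ∪ ρ := Finset.union_subset_union_right hsub
  refine (Finset.subset_sdiff.mpr ⟨?_, disjoint_of_mem_link hρ⟩).antisymm hsub
  exact hν ▸ Finset.subset_union_right

theorem IsFreePair.union_of_link {X : SComplex} {σ γ τ : Finset ℕ}
    (h : (X.link σ).IsFreePair γ τ) : X.IsFreePair (σ ∪ γ) (σ ∪ τ) := by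
  refine ⟨(mem_link.mp h.1).2.2, h.2.1.union_of_link,
    Finset.union_subset_union_right h.2.2.1, fun ν hν hsub => ?_⟩
  have hσν : σ ⊆ ν := Finset.union_subset_iff.mp hsub |>.1
  have hγν : γ ⊆ ν \ σ :=
    Finset.subset_sdiff.mpr ⟨Finset.union_subset_iff.mp hsub |>.2, disjoint_of_mem_link h.1⟩
  rw [← h.2.2.2 _ (hν.sdiff_link hσν) hγν, Finset.union_sdiff_of_subset hσν]

theorem link_del_union {X : SComplex} {σ γ : Finset ℕ} (hγ : Disjoint γ σ) :
    (X.del (σ ∪ γ)).link σ = (X.link σ).del γ := by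
  ext ρ
  have hγρ : γ ⊆ σ ∪ ρ ↔ γ ⊆ ρ :=
    ⟨fun h => hγ.left_le_of_le_sup_left h, fun h => h.trans Finset.subset_union_right⟩
  simp only [mem_link, mem_del, Finset.union_subset_iff, Finset.subset_union_left, true_and, hγρ]
  tauto

theorem del_del_of_subset {X : SComplex} {σ τ : Finset ℕ} (h : σ ⊆ τ) :
    (X.del τ).del σ = X.del σ := by
  ext ρ
  simp only [mem_del]
  exact ⟨fun hρ => ⟨hρ.1.1, hρ.2⟩, fun hρ => ⟨⟨hρ.1, fun hτ => hρ.2 (h.trans hτ)⟩, hρ.2⟩⟩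

theorem ElemCollapse.exists_of_link {b : ℕ} {X L : SComplex} {σ : Finset ℕ}
    (h : ElemCollapse b (X.link σ) L) :
    ∃ Y, ElemCollapse (b + σ.card) X Y ∧ Y.link σ = L ∧ Y.del σ = X.del σ := by
  obtain ⟨γ, τ, hfree, hγ, rfl⟩ := elemCollapse_iff.mp h
  refine ⟨X.del (σ ∪ γ), elemCollapse_iff.mpr ⟨_, _, hfree.union_of_link, ?_, rfl⟩,
    link_del_union (disjoint_of_mem_link hfree.1), del_del_of_subset Finset.subset_union_left⟩
  calc (σ ∪ γ).card ≤ σ.card + γ.card := Finset.card_union_le _ _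
    _ ≤ b + σ.card := by omega

theorem CollapsesTo.exists_of_link {b : ℕ} {X L : SComplex} {σ : Finset ℕ}
    (h : CollapsesTo b (X.link σ) L) :
    ∃ Y, CollapsesTo (b + σ.card) X Y ∧ Y.link σ = L ∧ Y.del σ = X.del σ := by
  induction h with
  | refl => exact ⟨X, .refl, rfl, rfl⟩
  | tail _ hstep ih =>
    obtain ⟨Y, hXY, rfl, hdel⟩ := ih
    obtain ⟨Z, hYZ, hlink, hdel'⟩ := hstep.exists_of_link
    exact ⟨Z, hXY.tail hYZ, hlink, hdel'.trans hdel⟩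

theorem del_eq_self_of_link_eq_empty {X : SComplex} {σ : Finset ℕ} (h : X.link σ = empty) :
    X.del σ = X := by
  ext ν
  refine ⟨fun hν => (mem_del.mp hν).1, fun hν => mem_del.mpr ⟨hν, fun hσν => ?_⟩⟩
  simpa [h, empty] using sdiff_mem_link hν hσν

end SComplex

open SComplex

theorem collapsibility_le_max_del_link_general (X : SComplex) (k : ℕ) (σ : Finset ℕ)
    (hcard : σ.card = k + 1) :
    X.collapsibility ≤
      max (X.del σ).collapsibility ((X.link σ).collapsibility + k + 1) := by
  obtain ⟨Y, hXY, hlink, hdel⟩ :=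
    CollapsesTo.exists_of_link (X.link σ).collapsible_collapsibility
  rw [del_eq_self_of_link_eq_empty hlink] at hdel
  subst hdel
  refine collapsibility_le (Relation.ReflTransGen.trans (hXY.mono ?_)
    ((X.del σ).collapsible_collapsibility.mono (le_max_left _ _)))
  omega

/-- For a finite abstract simplicial complex `X` and a
`k`-dimensional face `σ ∈ X`,
`C(X) ≤ max {C(del(σ, X)), C(lk(σ, X)) + k + 1}`. -/
theorem collapsibility_le_max_del_link (X : SComplex) (k : ℕ) (σ : Finset ℕ)
    (hσ : σ ∈ X.faces) (hcard : σ.card = k + 1) :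
    X.collapsibility ≤
      max (X.del σ).collapsibility ((X.link σ).collapsibility + k + 1) :=
  collapsibility_le_max_del_link_general X k σ hcard
end
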